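/- arXiv:2301.07948 — 2 statements merged into one kernel-verified Lean document; each statement's English description precedes it below -/
import Mathlib

section
/- Let R be a ring and n a positive integer. Then R is periodic if and only if for every upper triangular matrix A ∈ Mₙ(R) (i.e., A i j = 0 whenever j < i) there exist positive integers k > l with A^k = A^l. (Since products of upper triangular matrices are upper triangular, this says precisely that the upper triangular matrix ring Tₙ(R) is periodic if and only if R is periodic.) -/
/-!
A periodic ring `R` has nonzero characteristic `c` (compare `2 ^ m = 2 ^ n`), so it is an algebra
over the finite ring `ZMod c`, and an element integral over a finite ring is periodic, since its
powers lie in the finite subalgebra it generates. For an upper triangular `A`, taking diagonal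
entries commutes with products; choosing `N, P` with `a ^ (N + P) = a ^ N` for every diagonal entry
`a`, the matrix `A ^ (N + P) - A ^ N` is strictly upper triangular, hence nilpotent, so `A` is a
root of a power of the monic polynomial `X ^ (N + P) - X ^ N`.
-/

/-- A ring `R` is *periodic* if for every `x ∈ R` there exist positive integers
`m > n` with `x ^ m = x ^ n`. -/
def IsPeriodicRing (R : Type*) [Ring R] : Prop :=
  ∀ x : R, ∃ m n : ℕ, 0 < n ∧ n < m ∧ x ^ m = x ^ n

open Polynomial

theorem exists_pow_eq_pow_of_finite {M : Type*} [Monoid M] [Finite M] (x : M) :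
    ∃ m n : ℕ, 0 < n ∧ n < m ∧ x ^ m = x ^ n := by
  obtain ⟨a, b, hab, he⟩ := Finite.exists_ne_map_eq_of_infinite fun k : ℕ => x ^ (k + 1)
  rcases hab.lt_or_gt with h | h
  · exact ⟨b + 1, a + 1, by omega, by omega, he.symm⟩
  · exact ⟨a + 1, b + 1, by omega, by omega, he⟩

theorem exists_pow_eq_pow_of_isIntegral {K A : Type*} [CommRing K] [Finite K] [Ring A]
    [Algebra K A] {x : A} (hx : IsIntegral K x) :
    ∃ m n : ℕ, 0 < n ∧ n < m ∧ x ^ m = x ^ n := by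
  have := Algebra.finite_adjoin_simple_of_isIntegral hx
  have : Finite (Algebra.adjoin K {x}) := Module.finite_of_finite K
  obtain ⟨m, n, hn, hnm, he⟩ :=
    exists_pow_eq_pow_of_finite (⟨x, Algebra.self_mem_adjoin_singleton K x⟩ : Algebra.adjoin K {x})
  exact ⟨m, n, hn, hnm, congrArg Subtype.val he⟩

theorem pow_add_mul_eq_pow {M : Type*} [Monoid M] {x : M} {n p k : ℕ}
    (h : x ^ (n + p) = x ^ n) (hk : n ≤ k) (t : ℕ) : x ^ (k + t * p) = x ^ k := by
  induction t with
  | zero => simp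
  | succ t ih =>
    calc x ^ (k + (t + 1) * p) = x ^ (k - n + t * p) * x ^ (n + p) := by
          rw [← pow_add]; congr 1; rw [Nat.succ_mul]; omega
      _ = x ^ (k + t * p) := by rw [h, ← pow_add]; congr 1; omega
      _ = x ^ k := ih

namespace Matrix

variable {m R : Type*}

theorem IsUpperTriangular.mul_apply_self [Fintype m] [LinearOrder m]
    [NonUnitalNonAssocSemiring R] {M N : Matrix m m R} (hM : M.IsUpperTriangular)
    (hN : N.IsUpperTriangular) (i : m) : (M * N) i i = M i i * N i i := by
  refine Finset.sum_eq_single i (fun j _ hji => ?_) (by simp)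
  rcases hji.lt_or_gt with h | h
  · simp [hM h]
  · simp [hN h]

theorem IsUpperTriangular.pow_apply_self [Fintype m] [LinearOrder m] [DecidableEq m] [Semiring R]
    {M : Matrix m m R} (hM : M.IsUpperTriangular) (i : m) (k : ℕ) :
    (M ^ k) i i = M i i ^ k := by
  induction k with
  | zero => simp
  | succ k ih =>
    rw [pow_succ, IsUpperTriangular.mul_apply_self (hM.pow k) hM, ih, pow_succ]

theorem pow_apply_eq_zero_of_lt_add {n : ℕ} [Semiring R] {M : Matrix (Fin n) (Fin n) R}
    (hM : ∀ i j, j ≤ i → M i j = 0) (k : ℕ) {i j : Fin n} (hij : (j : ℕ) < i + k) :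
    (M ^ k) i j = 0 := by
  induction k generalizing i with
  | zero => exact one_apply_ne (Fin.ne_of_gt hij)
  | succ k ih =>
    rw [pow_succ', mul_apply]
    refine Finset.sum_eq_zero fun l _ => ?_
    rcases le_or_gt l i with hli | hil
    · rw [hM i l hli, zero_mul]
    · rw [ih (by omega), mul_zero]

theorem isNilpotent_of_forall_le_apply_eq_zero {n : ℕ} [Semiring R]
    {M : Matrix (Fin n) (Fin n) R} (hM : ∀ i j, j ≤ i → M i j = 0) : IsNilpotent M :=
  ⟨n, ext fun i j => pow_apply_eq_zero_of_lt_add hM n (by omega)⟩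

end Matrix

namespace IsPeriodicRing

variable {R : Type*} [Ring R]

theorem ringChar_ne_zero (h : IsPeriodicRing R) : ringChar R ≠ 0 := by
  obtain ⟨m, n, -, hnm, he⟩ := h 2
  have hlt : 2 ^ n < 2 ^ m := Nat.pow_lt_pow_right (by norm_num) hnm
  have hdvd : ringChar R ∣ 2 ^ m - 2 ^ n := by
    rw [← CharP.cast_eq_zero_iff R, Nat.cast_sub hlt.le]
    push_cast
    exact sub_eq_zero.mpr he
  rintro h0
  rw [h0, zero_dvd_iff] at hdvd
  omega

theorem exists_pow_add_eq_pow {ι : Type*} [Fintype ι] (h : IsPeriodicRing R) (f : ι → R) :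
    ∃ N P : ℕ, 0 < P ∧ ∀ i, f i ^ (N + P) = f i ^ N := by
  choose m n hn hnm he using fun i => h (f i)
  refine ⟨Finset.univ.sup n, ∏ i, (m i - n i), Finset.prod_pos fun i _ => by grind, fun i => ?_⟩
  have hper : f i ^ (n i + (m i - n i)) = f i ^ n i := by rw [Nat.add_sub_cancel' (hnm i).le, he]
  obtain ⟨t, ht⟩ : m i - n i ∣ ∏ i, (m i - n i) := Finset.dvd_prod_of_mem _ (Finset.mem_univ i)
  rw [ht, mul_comm]
  exact pow_add_mul_eq_pow hper (Finset.le_sup (Finset.mem_univ i)) t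

theorem isIntegral_of_isUpperTriangular (K : Type*) [CommRing K] [Algebra K R]
    (h : IsPeriodicRing R) {n : ℕ} {A : Matrix (Fin n) (Fin n) R} (hA : A.IsUpperTriangular) :
    IsIntegral K A := by
  obtain ⟨N, P, hP, hNP⟩ := h.exists_pow_add_eq_pow A.diag
  have hB : ∀ i j, j ≤ i → (A ^ (N + P) - A ^ N) i j = 0 := by
    intro i j hji
    rcases hji.lt_or_eq with hji | rfl
    · simp [hA.pow _ hji]
    · simpa [hA.pow_apply_self, sub_eq_zero] using hNP j
  obtain ⟨k, hk⟩ := Matrix.isNilpotent_of_forall_le_apply_eq_zero hB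
  refine ⟨(X ^ (N + P) - X ^ N) ^ k, (monic_X_pow_sub ?_).pow k, by simpa using hk⟩
  exact (degree_X_pow_le N).trans_lt (by exact_mod_cast Nat.lt_add_of_pos_right hP)

theorem exists_pow_eq_pow_of_isUpperTriangular (h : IsPeriodicRing R) {n : ℕ}
    {A : Matrix (Fin n) (Fin n) R} (hA : A.IsUpperTriangular) :
    ∃ k l : ℕ, 0 < l ∧ l < k ∧ A ^ k = A ^ l := by
  have : NeZero (ringChar R) := ⟨h.ringChar_ne_zero⟩
  let := ZMod.algebra R (ringChar R)
  exact exists_pow_eq_pow_of_isIntegral (h.isIntegral_of_isUpperTriangular (ZMod (ringChar R)) hA)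

end IsPeriodicRing

/-- The upper triangular matrix ring `Tₙ(R)` is periodic if and only if `R` is
periodic: `R` is periodic iff every upper triangular `n × n` matrix `A` over `R`
satisfies `A ^ k = A ^ l` for some positive integers `k > l`. -/
theorem periodic_iff_triangular_matrices_periodic (R : Type*) [Ring R]
    (n : ℕ) (hn : 0 < n) :
    IsPeriodicRing R ↔
      ∀ A : Matrix (Fin n) (Fin n) R, (∀ i j : Fin n, j < i → A i j = 0) →
        ∃ k l : ℕ, 0 < l ∧ l < k ∧ A ^ k = A ^ l := by
  refine ⟨fun hR A hA => hR.exists_pow_eq_pow_of_isUpperTriangular fun i j => hA i j, fun h x => ?_⟩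
  obtain ⟨k, l, hl, hlk, he⟩ :=
    h (Matrix.diagonal fun _ => x) fun i j hji => Matrix.diagonal_apply_ne' _ hji.ne
  exact ⟨k, l, hl, hlk, by simpa [Matrix.diagonal_pow] using congr_fun₂ he ⟨0, hn⟩ ⟨0, hn⟩⟩
end

section
/- Let k be a commutative ring and let A and B be commutative k-algebras which, as rings, are periodic. Then the tensor product algebra A ⊗[k] B is a periodic ring. -/
/-!
A periodic element is integral over `ℤ`, and `2` being periodic forces positive characteristic
`p`. So in a commutative periodic ring a finite set of periodic elements generates a subalgebra
that is a finitely generated module over the finite ring `ZMod p`, hence finite, and all its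
elements are periodic. In `A ⊗[k] B` this applies to sums of pure tensors `a ⊗ₜ b`, which are
periodic because `a ⊗ₜ 1` and `1 ⊗ₜ b` are commuting periodic elements.
-/

open scoped TensorProduct

def IsPeriodic {M : Type*} [Monoid M] (x : M) : Prop :=
  ∃ m n : ℕ, 0 < n ∧ n < m ∧ x ^ m = x ^ n

theorem isPeriodicRing_iff {R : Type*} [Ring R] : IsPeriodicRing R ↔ ∀ x : R, IsPeriodic x :=
  Iff.rfl

theorem isPeriodic_iff_finite_range_pow {M : Type*} [Monoid M] {x : M} :
    IsPeriodic x ↔ (Set.range (x ^ · : ℕ → M)).Finite := by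
  constructor
  · rintro ⟨m, n, -, hnm, h⟩
    have hlow : ∀ k, ∃ j < m, x ^ j = x ^ k := by
      intro k
      induction k using Nat.strong_induction_on with
      | _ k ih =>
        by_cases hk : k < m
        · exact ⟨k, hk, rfl⟩
        obtain ⟨j, hj, hjk⟩ := ih (k - (m - n)) (by omega)
        refine ⟨j, hj, hjk.trans ?_⟩
        calc x ^ (k - (m - n)) = x ^ (k - m) * x ^ n := by rw [← pow_add]; congr 1; omega
          _ = x ^ (k - m) * x ^ m := by rw [h]
          _ = x ^ k := by rw [← pow_add]; congr 1; omega
    refine ((Set.finite_Iio m).image (x ^ ·)).subset ?_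
    rintro _ ⟨k, rfl⟩
    obtain ⟨j, hj, hjk⟩ := hlow k
    exact ⟨j, hj, hjk⟩
  · intro h
    obtain ⟨i, j, hij, hpow⟩ := h.exists_lt_map_eq_of_forall_mem
      (f := fun t : ℕ => x ^ (t + 1)) fun t => Set.mem_range_self (t + 1)
    exact ⟨j + 1, i + 1, by omega, by omega, hpow.symm⟩

theorem isPeriodic_zero {M : Type*} [MonoidWithZero M] : IsPeriodic (0 : M) :=
  ⟨2, 1, one_pos, one_lt_two, by simp⟩

theorem IsPeriodic.map {M N F : Type*} [Monoid M] [Monoid N] [FunLike F M N]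
    [MonoidHomClass F M N] (f : F) {x : M} (hx : IsPeriodic x) : IsPeriodic (f x) := by
  obtain ⟨m, n, hn, hnm, h⟩ := hx
  exact ⟨m, n, hn, hnm, by rw [← map_pow, h, map_pow]⟩

theorem IsPeriodic.mul {M : Type*} [Monoid M] {x y : M} (hx : IsPeriodic x)
    (hy : IsPeriodic y) (hxy : Commute x y) : IsPeriodic (x * y) := by
  rw [isPeriodic_iff_finite_range_pow] at *
  refine (hx.mul hy).subset ?_
  rintro _ ⟨k, rfl⟩
  simp only [hxy.mul_pow]
  exact Set.mul_mem_mul ⟨k, rfl⟩ ⟨k, rfl⟩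

theorem IsPeriodic.isIntegral {R S : Type*} [CommRing R] [Nontrivial R] [Ring S] [Algebra R S]
    {x : S} (hx : IsPeriodic x) : IsIntegral R x := by
  obtain ⟨m, n, -, hnm, h⟩ := hx
  refine ⟨Polynomial.X ^ m - Polynomial.X ^ n, ?_, ?_⟩
  · apply Polynomial.monic_X_pow_sub
    rw [Polynomial.degree_X_pow]
    exact_mod_cast hnm
  · simp [h]

theorem IsPeriodic.add {K R : Type*} [CommRing K] [Finite K] [CommRing R] [Algebra K R]
    {x y : R} (hx : IsPeriodic x) (hy : IsPeriodic y) : IsPeriodic (x + y) := by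
  let S := Algebra.adjoin K {x, y}
  have : Module.Finite K S := Algebra.finite_adjoin_of_finite_of_isIntegral (Set.toFinite _)
    (by rintro z (rfl | rfl) <;> exact (IsPeriodic.isIntegral (R := ℤ) ‹_›).tower_top)
  have : Finite S := Module.finite_of_finite K
  rw [isPeriodic_iff_finite_range_pow]
  refine (Set.toFinite (S : Set R)).subset ?_
  rintro _ ⟨k, rfl⟩
  exact pow_mem (add_mem (Algebra.subset_adjoin (by simp)) (Algebra.subset_adjoin (by simp))) k

theorem ringChar_ne_zero_of_isPeriodic_natCast {R : Type*} [Ring R] {n : ℕ} (hn : 1 < n)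
    (h : IsPeriodic (n : R)) : ringChar R ≠ 0 := by
  obtain ⟨a, b, -, hab, h⟩ := h
  have hlt : n ^ b < n ^ a := Nat.pow_lt_pow_right hn hab
  have hcast : ((n ^ a - n ^ b : ℕ) : R) = 0 := by
    rw [Nat.cast_sub hlt.le, Nat.cast_pow, Nat.cast_pow, h, sub_self]
  exact ne_zero_of_dvd_ne_zero (by omega) (ringChar.dvd hcast)

/-- If `A` and `B` are commutative `k`-algebras which are periodic as rings, then
the tensor product `A ⊗[k] B` is a periodic ring. -/
theorem periodic_tensorProduct_of_comm (k : Type*) [CommRing k]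
    (A B : Type*) [CommRing A] [CommRing B] [Algebra k A] [Algebra k B]
    (hA : IsPeriodicRing A) (hB : IsPeriodicRing B) :
    IsPeriodicRing (A ⊗[k] B) := by
  rw [isPeriodicRing_iff] at *
  let ιA : A →ₐ[k] A ⊗[k] B := Algebra.TensorProduct.includeLeft
  let ιB : B →ₐ[k] A ⊗[k] B := Algebra.TensorProduct.includeRight
  have h2 : IsPeriodic ((2 : ℕ) : A ⊗[k] B) := map_natCast ιA 2 ▸ (hA 2).map ιA
  have : NeZero (ringChar (A ⊗[k] B)) := ⟨ringChar_ne_zero_of_isPeriodic_natCast one_lt_two h2⟩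
  let := ZMod.algebra (A ⊗[k] B) (ringChar (A ⊗[k] B))
  intro z
  induction z using TensorProduct.induction_on with
  | zero => exact isPeriodic_zero
  | tmul a b =>
    simpa [ιA, ιB] using ((hA a).map ιA).mul ((hB b).map ιB) (Commute.all _ _)
  | add x y hx hy => exact hx.add (K := ZMod (ringChar (A ⊗[k] B))) hy
end
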